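/- Let (p_n) ∈ SVA₊. Suppose the weighted geometric means w_n of a positive sequence (u_n) converge to a > 0. Then (u_n) converges to a if and only if liminf_{λ→1⁻} limsup_{n→∞} { |∏_{k=λ_n+1}^{n} (u_n/u_k)^{p_k}|* }^{1/(P_n − P_{λ_n})} = 1. -/

import Mathlib

open Filter

noncomputable def mulAbs (x : ℝ) : ℝ := if 1 ≤ x then x else x⁻¹

noncomputable def Psum (p : ℕ → ℝ) (n : ℕ) : ℝ := ∑ k ∈ Finset.range (n + 1), p k

noncomputable def wgm (p u : ℕ → ℝ) (n : ℕ) : ℝ :=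
  (∏ k ∈ Finset.range (n + 1), u k ^ p k) ^ (1 / Psum p n)

def SVA (p : ℕ → ℝ) : Prop :=
  ∀ l : ℝ, 0 < l → l ≠ 1 →
    0 < liminf (fun n : ℕ => |Psum p ⌊l * (n : ℝ)⌋₊ / Psum p n - 1|) atTop

/-!
Write `v = log u`. Then `log w_n` is the weighted mean `Q_n / P_n` of `v`, where
`Q_n = ∑_{k ≤ n} p_k v_k`, and the quantity inside the `liminf` equals `exp |v_n - M_n(λ)|`,
with `M_n(λ) = (Q_n - Q_{λ_n}) / (P_n - P_{λ_n})` the delayed mean. The SVA₊ condition keeps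
`P_n - P_{λ_n}` above a fixed fraction of `P_n`, and this is exactly what makes the delayed means
inherit the limit `log a` of `Q_n / P_n`. Hence `v_n → log a` iff `|v_n - M_n(λ)| → 0`, and the
latter is what the `liminf`–`limsup` condition expresses.
-/

open Topology Finset

section Psum

variable {p : ℕ → ℝ}

lemma Psum_pos (hp : ∀ n, 0 ≤ p n) (hp0 : 0 < p 0) (n : ℕ) : 0 < Psum p n :=
  hp0.trans_le <| single_le_sum (fun i _ => hp i) (mem_range.2 n.succ_pos)

lemma Psum_mono (hp : ∀ n, 0 ≤ p n) : Monotone (Psum p) := fun _ _ h =>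
  sum_le_sum_of_subset_of_nonneg (range_subset_range.2 (Nat.succ_le_succ h)) fun i _ _ => hp i

lemma Psum_sub_Psum (p : ℕ → ℝ) {m n : ℕ} (h : m ≤ n) :
    Psum p n - Psum p m = ∑ k ∈ Ioc m n, p k := by
  rw [Psum, Psum, ← Ico_add_one_add_one_eq_Ioc, sum_Ico_eq_sub p (Nat.add_le_add_right h 1)]

end Psum

lemma Nat.floor_mul_le_self {l : ℝ} (hl : l ≤ 1) (n : ℕ) : ⌊l * n⌋₊ ≤ n :=
  Nat.floor_le_of_le (mul_le_of_le_one_left n.cast_nonneg hl)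

lemma mulAbs_exp (x : ℝ) : mulAbs (Real.exp x) = Real.exp |x| := by
  unfold mulAbs
  split_ifs with h
  · rw [abs_of_nonneg (Real.one_le_exp_iff.1 h)]
  · rw [abs_of_neg (Real.exp_lt_one_iff.1 (not_le.1 h)), Real.exp_neg]

lemma log_wgm {p u : ℕ → ℝ} (hu : ∀ n, 0 < u n) (n : ℕ) :
    Real.log (wgm p u n) = Psum (fun k => p k * Real.log (u k)) n / Psum p n := by
  have hpow : ∀ k, 0 < u k ^ p k := fun k => Real.rpow_pos_of_pos (hu k) _
  rw [wgm, Real.log_rpow (prod_pos fun k _ => hpow k), Real.log_prod fun k _ => (hpow k).ne',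
    Psum, one_div_mul_eq_div]
  exact congrArg (· / _) (sum_congr rfl fun k _ => Real.log_rpow (hu k) _)

lemma mulAbs_prod_rpow_eq_exp {p u : ℕ → ℝ} (hu : ∀ n, 0 < u n) {m n : ℕ} (hmn : m ≤ n)
    (hD : 0 < Psum p n - Psum p m) :
    mulAbs (∏ k ∈ Ioc m n, (u n / u k) ^ p k) ^ (1 / (Psum p n - Psum p m)) =
      Real.exp |Real.log (u n) -
        (Psum (fun k => p k * Real.log (u k)) n - Psum (fun k => p k * Real.log (u k)) m) /
          (Psum p n - Psum p m)| := by
  have hprod : ∏ k ∈ Ioc m n, (u n / u k) ^ p k =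
      Real.exp ((Psum p n - Psum p m) * Real.log (u n) -
        (Psum (fun k => p k * Real.log (u k)) n - Psum (fun k => p k * Real.log (u k)) m)) := by
    rw [Psum_sub_Psum p hmn, Psum_sub_Psum _ hmn, sum_mul, ← sum_sub_distrib, Real.exp_sum]
    refine prod_congr rfl fun k _ => ?_
    rw [Real.rpow_def_of_pos (div_pos (hu n) (hu k)), Real.log_div (hu n).ne' (hu k).ne']
    ring_nf
  rw [hprod, mulAbs_exp, Real.rpow_def_of_pos (Real.exp_pos _), Real.log_exp,
    ← abs_of_pos (one_div_pos.2 hD), ← abs_mul]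
  congr 2
  field_simp

theorem tendsto_sub_div_sub_of_tendsto_div {S P : ℕ → ℝ} {m : ℕ → ℕ} {A c : ℝ}
    (hP : ∀ n, 0 < P n) (hm : Tendsto m atTop atTop) (hc : 0 < c)
    (hgap : ∀ᶠ n in atTop, c * P n ≤ P n - P (m n))
    (hS : Tendsto (fun n => S n / P n) atTop (𝓝 A)) :
    Tendsto (fun n => (S n - S (m n)) / (P n - P (m n))) atTop (𝓝 A) := by
  set e : ℕ → ℝ := fun n => |S n / P n - A|
  have he : Tendsto e atTop (𝓝 0) := by simpa using (hS.sub_const A).abs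
  have hbound : Tendsto (fun n => (e n + e (m n)) / c) atTop (𝓝 0) := by
    simpa using (he.add (he.comp hm)).div_const c
  refine tendsto_iff_norm_sub_tendsto_zero.2 <|
    squeeze_zero' (Eventually.of_forall fun _ => norm_nonneg _) ?_ hbound
  filter_upwards [hgap] with n hn
  have hPn := hP n
  have hPm := hP (m n)
  have hD : 0 < P n - P (m n) := (mul_pos hc hPn).trans_le hn
  calc ‖(S n - S (m n)) / (P n - P (m n)) - A‖
      = |(S n / P n - A) * P n - (S (m n) / P (m n) - A) * P (m n)| / (P n - P (m n)) := by
        rw [Real.norm_eq_abs, div_sub' hD.ne', abs_div, abs_of_pos hD]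
        congr 2
        field_simp
        ring
    _ ≤ (e n * P n + e (m n) * P n) / (c * P n) := by
        have hnum : |(S n / P n - A) * P n - (S (m n) / P (m n) - A) * P (m n)|
            ≤ e n * P n + e (m n) * P n :=
          calc _ ≤ e n * P n + e (m n) * P (m n) := by
                simpa only [abs_mul, abs_of_pos hPn, abs_of_pos hPm] using
                  abs_sub ((S n / P n - A) * P n) ((S (m n) / P (m n) - A) * P (m n))
            _ ≤ _ := by gcongr; linarith
        exact div_le_div₀ ((abs_nonneg _).trans hnum) hnum (mul_pos hc hPn) hn
    _ = (e n + e (m n)) / c := by field_simp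

theorem SVA.exists_eventually_mul_le_sub {p : ℕ → ℝ} (hSVA : SVA p) (hp : ∀ n, 0 ≤ p n)
    (hp0 : 0 < p 0) {l : ℝ} (hl : l ∈ Set.Ioo 0 1) :
    ∃ c > 0, ∀ᶠ n : ℕ in atTop, c * Psum p n ≤ Psum p n - Psum p ⌊l * n⌋₊ := by
  have hc := hSVA l hl.1 hl.2.ne
  refine ⟨_, half_pos hc, ?_⟩
  filter_upwards [eventually_lt_of_lt_liminf (half_lt_self hc)
    (isBoundedUnder_of ⟨0, fun n => abs_nonneg _⟩)] with n hn
  have hPn := Psum_pos hp hp0 n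
  have hle : Psum p ⌊l * n⌋₊ ≤ Psum p n := Psum_mono hp (Nat.floor_mul_le_self hl.2.le n)
  rw [abs_sub_comm, one_sub_div hPn.ne', abs_of_nonneg (div_nonneg (sub_nonneg.2 hle) hPn.le),
    lt_div_iff₀ hPn] at hn
  exact hn.le

section ExpAbsSub

variable {α : Type*} {L : Filter α} {F : α → ℕ → ℝ} {v : ℕ → ℝ} {A : ℝ}

theorem liminf_limsup_eq_one_of_tendsto [L.NeBot]
    (hF : ∀ᶠ l in L, ∃ M : ℕ → ℝ, Tendsto M atTop (𝓝 A) ∧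
      F l =ᶠ[atTop] fun n => Real.exp |v n - M n|)
    (hv : Tendsto v atTop (𝓝 A)) :
    liminf (fun l => limsup (F l) atTop) L = 1 := by
  have hone : (fun l => limsup (F l) atTop) =ᶠ[L] fun _ => 1 := by
    filter_upwards [hF] with l ⟨M, hM, hFl⟩
    refine Tendsto.limsup_eq (Tendsto.congr' hFl.symm ?_)
    simpa using (hv.sub hM).abs.rexp
  rw [liminf_congr hone, liminf_const]

theorem tendsto_of_liminf_limsup_eq_one
    (hF : ∀ᶠ l in L, ∃ M : ℕ → ℝ, Tendsto M atTop (𝓝 A) ∧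
      F l =ᶠ[atTop] fun n => Real.exp |v n - M n|)
    (hlim : liminf (fun l => limsup (F l) atTop) L = 1) :
    Tendsto v atTop (𝓝 A) := by
  have hbdd : IsBoundedUnder (· ≥ ·) L fun l => limsup (F l) atTop := by
    by_contra h
    exact zero_ne_one (Real.liminf_of_not_isBoundedUnder h ▸ hlim)
  have hcobdd : IsCoboundedUnder (· ≥ ·) L fun l => limsup (F l) atTop := by
    by_contra h
    exact zero_ne_one (Real.liminf_of_not_isCoboundedUnder h ▸ hlim)
  refine Metric.tendsto_nhds.2 fun ε hε => ?_
  have hsmall :=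
    frequently_lt_of_liminf_lt hcobdd (hlim.trans_lt (Real.one_lt_exp_iff.2 (half_pos hε)))
  have hlarge := eventually_lt_of_lt_liminf (hlim ▸ zero_lt_one) hbdd
  obtain ⟨l, hlt, hpos, M, hM, hFl⟩ := (hsmall.and_eventually (hlarge.and hF)).exists
  -- an unbounded `F l` would have junk `limsup` equal to `0`
  have hbddF : IsBoundedUnder (· ≤ ·) atTop (F l) := by
    by_contra h
    exact hpos.ne' (Real.limsup_of_not_isBoundedUnder h)
  filter_upwards [eventually_lt_of_limsup_lt hlt hbddF, hFl,
    Metric.tendsto_nhds.1 hM _ (half_pos hε)] with n hFn hFn' hMn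
  rw [hFn', Real.exp_lt_exp] at hFn
  rw [Real.dist_eq] at hMn ⊢
  calc |v n - A| ≤ |v n - M n| + |M n - A| := abs_sub_le _ _ _
    _ < ε / 2 + ε / 2 := add_lt_add hFn hMn
    _ = ε := add_halves ε

end ExpAbsSub

theorem tauberian_left_general (p u : ℕ → ℝ) (a : ℝ)
    (hp : ∀ n, 0 ≤ p n) (hp0 : 0 < p 0)
    (hSVA : SVA p)
    (hu : ∀ n, 0 < u n) (ha : 0 < a)
    (hw : Tendsto (wgm p u) atTop (nhds a)) :
    Tendsto u atTop (nhds a) ↔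
      liminf (fun l : ℝ =>
          limsup (fun n : ℕ =>
              (mulAbs (∏ k ∈ Finset.Ioc ⌊l * (n : ℝ)⌋₊ n, (u n / u k) ^ p k)) ^
                (1 / (Psum p n - Psum p ⌊l * (n : ℝ)⌋₊))) atTop)
        (nhdsWithin 1 (Set.Ioo 0 1)) = 1 := by
  have hmean : Tendsto (fun n => Psum (fun k => p k * Real.log (u k)) n / Psum p n) atTop
      (𝓝 (Real.log a)) :=
    (hw.log ha.ne').congr (log_wgm hu)
  have hF : ∀ᶠ l : ℝ in 𝓝[Set.Ioo 0 1] 1,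
      ∃ M : ℕ → ℝ, Tendsto M atTop (𝓝 (Real.log a)) ∧
      (fun n : ℕ => mulAbs (∏ k ∈ Ioc ⌊l * n⌋₊ n, (u n / u k) ^ p k) ^
        (1 / (Psum p n - Psum p ⌊l * n⌋₊))) =ᶠ[atTop]
        fun n => Real.exp |Real.log (u n) - M n| := by
    filter_upwards [self_mem_nhdsWithin] with l hl
    obtain ⟨c, hc, hgap⟩ := hSVA.exists_eventually_mul_le_sub hp hp0 hl
    refine ⟨_, tendsto_sub_div_sub_of_tendsto_div (Psum_pos hp hp0)
      (tendsto_nat_floor_mul_atTop l hl.1) hc hgap hmean, ?_⟩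
    filter_upwards [hgap] with n hn
    exact mulAbs_prod_rpow_eq_exp hu (Nat.floor_mul_le_self hl.2.le n)
      ((mul_pos hc (Psum_pos hp hp0 n)).trans_le hn)
  have : (𝓝[Set.Ioo 0 1] (1 : ℝ)).NeBot := right_nhdsWithin_Ioo_neBot one_pos
  constructor
  · exact fun hu' => liminf_limsup_eq_one_of_tendsto hF (hu'.log ha.ne')
  · intro hlim
    simpa [Real.exp_log, hu, ha] using (tendsto_of_liminf_limsup_eq_one hF hlim).rexp

theorem tauberian_left (p u : ℕ → ℝ) (a : ℝ)
    (hp : ∀ n, 0 ≤ p n) (hp0 : 0 < p 0)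
    (hP : Tendsto (Psum p) atTop atTop) (hSVA : SVA p)
    (hu : ∀ n, 0 < u n) (ha : 0 < a)
    (hw : Tendsto (wgm p u) atTop (nhds a)) :
    Tendsto u atTop (nhds a) ↔
      liminf (fun l : ℝ =>
          limsup (fun n : ℕ =>
              (mulAbs (∏ k ∈ Finset.Ioc ⌊l * (n : ℝ)⌋₊ n, (u n / u k) ^ p k)) ^
                (1 / (Psum p n - Psum p ⌊l * (n : ℝ)⌋₊))) atTop)
        (nhdsWithin 1 (Set.Ioo 0 1)) = 1 :=
  tauberian_left_general p u a hp hp0 hSVA hu ha hw
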